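/- Let (G,m) be a summable weighted graph, let ψ : V → {1,−1} with A = ψ⁻¹(1) and B = ψ⁻¹(−1) both nonempty, and let P_ψ : L²(G,m) → L²(G,m) be the bounded operator (P_ψ f)(v) = (1/m(v))·∑_{u : ψ(u) = ψ(v)} m(v,u)·f(u). Then the operator norm of P_ψ satisfies ‖P_ψ‖ ≤ κ(A,B). -/

import Mathlib

open MeasureTheory

/-- A summable weighted graph on a vertex set `V`. -/
structure SummableWeightedGraph (V : Type*) where
  m : V → V → ℝ
  symm : ∀ u v, m u v = m v u
  nonneg : ∀ u v, 0 ≤ m u v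
  loopless : ∀ v, m v v = 0
  summable : Summable fun p : V × V => m p.1 p.2
  noIsolated : ∀ v, 0 < ∑' u, m v u

namespace SummableWeightedGraph

variable {V : Type*} (G : SummableWeightedGraph V)

/-- The weight of a vertex. -/
noncomputable def deg (v : V) : ℝ := ∑' u, G.m v u

/-- The weight of a set of vertices. -/
noncomputable def setWeight (S : Set V) : ℝ := ∑' v : S, G.deg v

/-- The weight of the boundary of a set of vertices. -/
noncomputable def boundaryWeight (S : Set V) : ℝ :=
  ∑' p : ↥S × ↥Sᶜ, G.m p.1 p.2

/-- The Cheeger constant. -/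
noncomputable def cheegerConst : ℝ :=
  sInf { r : ℝ | ∃ S : Set V, S.Nonempty ∧ G.setWeight S ≤ G.setWeight Sᶜ ∧
    r = G.boundaryWeight S / G.setWeight S }

/-- The weighted counting measure on vertices. -/
noncomputable def measure [MeasurableSpace V] : Measure V :=
  Measure.sum fun v => ENNReal.ofReal (G.deg v) • Measure.dirac v

/-- The normalised Laplacian, characterised by its pointwise formula. -/
def IsLaplacian [MeasurableSpace V]
    (L : Lp ℝ 2 G.measure →L[ℝ] Lp ℝ 2 G.measure) : Prop :=
  ∀ f : Lp ℝ 2 G.measure, ∀ᵐ v ∂G.measure,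
    L f v = f v - (G.deg v)⁻¹ * ∑' u, G.m v u * f u

end SummableWeightedGraph

namespace SummableWeightedGraph

variable {V : Type*} (G : SummableWeightedGraph V)

/-- `p_S(v)`, the probability that the random walk moves from `v` into `S` in one step. -/
noncomputable def pProb (S : Set V) (v : V) : ℝ := (∑' u : S, G.m v u) / G.deg v

/-- `κ(A,B)` for a partition `V = A ⊔ B` into nonempty sets. -/
noncomputable def kappaPair (A B : Set V) : ℝ :=
  max (⨆ v : A, G.pProb A v) (⨆ w : B, G.pProb B w)

/-- The invariant `κ(G,m)`. -/
noncomputable def kappa : ℝ :=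
  sInf { r : ℝ | ∃ A B : Set V, A.Nonempty ∧ B.Nonempty ∧ Disjoint A B ∧
    A ∪ B = Set.univ ∧ r = G.kappaPair A B }

end SummableWeightedGraph

/-!
With `Q(v,u) = m(v,u)` for `u, v` on the same side of `ψ` and `Q(v,u) = 0` otherwise, `P_ψ` is the
integral operator with kernel `Q(v,u) / m(v)`. The kernel `Q` is symmetric and its row sums are
`∑_u Q(v,u) = p_S(v) m(v) ≤ κ(A,B) m(v)`, `S` being the side of `v`. The Schur test (Cauchy–Schwarz
in each row, then exchanging the two summations by symmetry of `Q`) gives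
`‖P_ψ f‖² ≤ κ(A,B)² ‖f‖²`. All sums are taken in `ℝ≥0∞`, where no summability conditions arise.
-/

open scoped ENNReal

namespace ENNReal

variable {ι : Type*}

theorem tsum_mul_sq_le (a b : ι → ℝ≥0∞) :
    (∑' i, a i * b i) ^ 2 ≤ (∑' i, a i ^ 2) * ∑' i, b i ^ 2 := by
  let _ : MeasurableSpace ι := ⊤
  have H := lintegral_mul_le_Lp_mul_Lq Measure.count Real.HolderConjugate.two_two
    measurable_from_top.aemeasurable measurable_from_top.aemeasurable (f := a) (g := b)
  simp only [lintegral_count' measurable_from_top, Pi.mul_apply, rpow_two] at H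
  calc (∑' i, a i * b i) ^ 2 ≤ _ := pow_le_pow_left' H 2
    _ = (∑' i, a i ^ 2) * ∑' i, b i ^ 2 := by
      rw [mul_pow, ← rpow_natCast, ← rpow_natCast (_ ^ _), ← rpow_mul, ← rpow_mul]
      norm_num

theorem tsum_mul_sq_le_tsum_mul_tsum_mul_sq (q n : ι → ℝ≥0∞) :
    (∑' i, q i * n i) ^ 2 ≤ (∑' i, q i) * ∑' i, q i * n i ^ 2 := by
  have hsq : ∀ i, (q i ^ (2⁻¹ : ℝ)) ^ 2 = q i := fun i => by
    rw [← rpow_natCast, ← rpow_mul]; norm_num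
  have hmul : ∀ i, q i ^ (2⁻¹ : ℝ) * (q i ^ (2⁻¹ : ℝ) * n i) = q i * n i := fun i => by
    rw [← mul_assoc, ← sq, hsq]
  simpa only [hmul, hsq, mul_pow] using
    tsum_mul_sq_le (fun i => q i ^ (2⁻¹ : ℝ)) fun i => q i ^ (2⁻¹ : ℝ) * n i

/-- The Schur test for a symmetric kernel. -/
theorem tsum_mul_div_sq_le_of_symm {Q : ι → ι → ℝ≥0∞} (hQ : ∀ u v, Q u v = Q v u)
    {D : ι → ℝ≥0∞} (hD₀ : ∀ v, D v ≠ 0) (hD : ∀ v, D v ≠ ∞) {κ : ℝ≥0∞}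
    (hrow : ∀ v, ∑' u, Q v u ≤ κ * D v) (N : ι → ℝ≥0∞) :
    ∑' v, D v * ((∑' u, Q v u * N u) / D v) ^ 2 ≤ κ ^ 2 * ∑' v, D v * N v ^ 2 := by
  have hpoint : ∀ v, D v * ((∑' u, Q v u * N u) / D v) ^ 2 ≤ κ * ∑' u, Q v u * N u ^ 2 := by
    intro v
    calc D v * ((∑' u, Q v u * N u) / D v) ^ 2
        = (D v * (D v)⁻¹) * ((∑' u, Q v u * N u) ^ 2 / D v) := by
          simp only [div_eq_mul_inv]; ring
      _ = (∑' u, Q v u * N u) ^ 2 / D v := by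
          rw [ENNReal.mul_inv_cancel (hD₀ v) (hD v), one_mul]
      _ ≤ (κ * D v) * (∑' u, Q v u * N u ^ 2) / D v := by
          gcongr
          exact (tsum_mul_sq_le_tsum_mul_tsum_mul_sq _ _).trans (by gcongr; exact hrow v)
      _ = κ * ∑' u, Q v u * N u ^ 2 := by
          rw [mul_right_comm, ENNReal.mul_div_cancel_right (hD₀ v) (hD v)]
  calc ∑' v, D v * ((∑' u, Q v u * N u) / D v) ^ 2
      ≤ ∑' v, κ * ∑' u, Q v u * N u ^ 2 := ENNReal.tsum_le_tsum hpoint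
    _ = κ * ∑' u, (∑' v, Q u v) * N u ^ 2 := by
      simp_rw [ENNReal.tsum_mul_left, ← ENNReal.tsum_mul_right]
      rw [ENNReal.tsum_comm]
      exact congrArg _ (tsum_congr fun u => tsum_congr fun v => by rw [hQ])
    _ ≤ κ * ∑' u, κ * D u * N u ^ 2 := by gcongr with u; exact hrow u
    _ = κ ^ 2 * ∑' v, D v * N v ^ 2 := by
      simp_rw [mul_assoc, ENNReal.tsum_mul_left, sq, mul_assoc]

end ENNReal

theorem MeasureTheory.Lp.norm_le_mul_of_lintegral_sq_le {α E : Type*} [MeasurableSpace α]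
    {μ : Measure α} [NormedAddCommGroup E] {f g : Lp E 2 μ} {c : ℝ} (hc : 0 ≤ c)
    (h : ∫⁻ x, ‖g x‖ₑ ^ 2 ∂μ ≤ ENNReal.ofReal c ^ 2 * ∫⁻ x, ‖f x‖ₑ ^ 2 ∂μ) :
    ‖g‖ ≤ c * ‖f‖ := by
  have hsq (u : Lp E 2 μ) : eLpNorm u 2 μ ^ 2 = ∫⁻ x, ‖u x‖ₑ ^ 2 ∂μ := by
    simpa only [ENNReal.coe_ofNat, NNReal.coe_ofNat, ENNReal.rpow_two] using
      eLpNorm_nnreal_pow_eq_lintegral (f := u) (p := 2) two_ne_zero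
  have hle : eLpNorm g 2 μ ≤ ENNReal.ofReal c * eLpNorm f 2 μ := by
    rwa [← ENNReal.pow_le_pow_left_iff two_ne_zero, mul_pow, hsq, hsq]
  rw [Lp.norm_def, Lp.norm_def, ← ENNReal.toReal_ofReal hc, ← ENNReal.toReal_mul]
  exact ENNReal.toReal_mono (ENNReal.mul_ne_top ENNReal.ofReal_ne_top (Lp.eLpNorm_ne_top f)) hle

namespace SummableWeightedGraph

variable {V : Type*} (G : SummableWeightedGraph V)

lemma deg_pos (v : V) : 0 < G.deg v := G.noIsolated v

lemma summable_m (v : V) : Summable (G.m v) := G.summable.prod_factor v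

lemma pProb_nonneg (S : Set V) (v : V) : 0 ≤ G.pProb S v :=
  div_nonneg (tsum_nonneg fun u => G.nonneg v u) (G.deg_pos v).le

lemma pProb_le_one (S : Set V) (v : V) : G.pProb S v ≤ 1 := by
  refine (div_le_one (G.deg_pos v)).2 ?_
  rw [tsum_subtype]
  exact ((G.summable_m v).indicator S).tsum_le_tsum
    (Set.indicator_le_self' fun u _ => G.nonneg v u) (G.summable_m v)

lemma pProb_le_iSup (S : Set V) {v : V} (hv : v ∈ S) : G.pProb S v ≤ ⨆ w : S, G.pProb S w :=
  le_ciSup (f := fun w : S => G.pProb S w) ⟨1, Set.forall_mem_range.2 fun w => G.pProb_le_one S w⟩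
    ⟨v, hv⟩

lemma kappaPair_nonneg (A B : Set V) : 0 ≤ G.kappaPair A B :=
  le_max_of_le_left (Real.iSup_nonneg fun v => G.pProb_nonneg A v)

noncomputable def sameClassWeight {α : Type*} [DecidableEq α] (ψ : V → α) (v u : V) : ℝ≥0∞ :=
  if ψ u = ψ v then ENNReal.ofReal (G.m v u) else 0

variable {α : Type*} [DecidableEq α] (ψ : V → α)

lemma sameClassWeight_comm (u v : V) : G.sameClassWeight ψ u v = G.sameClassWeight ψ v u := by
  simp only [sameClassWeight, G.symm u v, eq_comm]

lemma tsum_sameClassWeight_mul (v : V) (g : V → ℝ≥0∞) :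
    ∑' u, G.sameClassWeight ψ v u * g u =
      ∑' u : {u // ψ u = ψ v}, ENNReal.ofReal (G.m v u) * g u := by
  refine (tsum_congr fun u => ?_).trans
    (tsum_subtype {u | ψ u = ψ v} fun u => ENNReal.ofReal (G.m v u) * g u).symm
  by_cases h : ψ u = ψ v <;> simp [sameClassWeight, h]

lemma tsum_sameClassWeight (v : V) :
    ∑' u, G.sameClassWeight ψ v u =
      ENNReal.ofReal (G.pProb {u | ψ u = ψ v} v) * ENNReal.ofReal (G.deg v) := by
  rw [← ENNReal.ofReal_mul (G.pProb_nonneg _ v), pProb, div_mul_cancel₀ _ (G.deg_pos v).ne',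
    ENNReal.ofReal_tsum_of_nonneg (f := fun u : {u | ψ u = ψ v} => G.m v u)
      (fun u => G.nonneg v u) ((G.summable_m v).subtype _)]
  have h := G.tsum_sameClassWeight_mul ψ v 1
  simp only [Pi.one_apply, mul_one] at h
  exact h

lemma enorm_inv_deg_mul_tsum_le (f : V → ℝ) (v : V) :
    ‖(G.deg v)⁻¹ * ∑' u : {u // ψ u = ψ v}, G.m v u * f u‖ₑ ≤
      (∑' u, G.sameClassWeight ψ v u * ‖f u‖ₑ) / ENNReal.ofReal (G.deg v) := by
  rw [enorm_mul, Real.enorm_of_nonneg (inv_nonneg.2 (G.deg_pos v).le),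
    ENNReal.ofReal_inv_of_pos (G.deg_pos v), mul_comm, ← div_eq_mul_inv,
    G.tsum_sameClassWeight_mul]
  gcongr
  refine enorm_tsum_le_tsum_enorm.trans_eq (tsum_congr fun u => ?_)
  rw [enorm_mul, Real.enorm_of_nonneg (G.nonneg v u)]

lemma pProb_sameClass_le_kappaPair {ψ : V → ℝ} (hψ : ∀ v, ψ v = 1 ∨ ψ v = -1) (v : V) :
    G.pProb {u | ψ u = ψ v} v ≤ G.kappaPair (ψ ⁻¹' {1}) (ψ ⁻¹' {-1}) := by
  rcases hψ v with hv | hv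
  · have hclass : {u | ψ u = ψ v} = ψ ⁻¹' {1} := by ext; simp [hv]
    rw [hclass]
    exact (G.pProb_le_iSup _ hv).trans (le_max_left _ _)
  · have hclass : {u | ψ u = ψ v} = ψ ⁻¹' {-1} := by ext; simp [hv]
    rw [hclass]
    exact (G.pProb_le_iSup _ hv).trans (le_max_right _ _)

lemma lintegral_measure [MeasurableSpace V] [MeasurableSingletonClass V] (g : V → ℝ≥0∞) :
    ∫⁻ v, g v ∂G.measure = ∑' v, ENNReal.ofReal (G.deg v) * g v := by
  simp [measure, lintegral_sum_measure, lintegral_smul_measure, lintegral_dirac]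

end SummableWeightedGraph

open SummableWeightedGraph in
theorem norm_Ppsi_le_kappaPair_general {V : Type*} [MeasurableSpace V] [MeasurableSingletonClass V]
    (G : SummableWeightedGraph V)
    (ψ : V → ℝ) (hψ : ∀ v, ψ v = 1 ∨ ψ v = -1)
    (P : Lp ℝ 2 G.measure →L[ℝ] Lp ℝ 2 G.measure)
    (hP : ∀ f : Lp ℝ 2 G.measure, ∀ᵐ v ∂G.measure,
      P f v = (G.deg v)⁻¹ * ∑' u : {u : V // ψ u = ψ v}, G.m v u * f u) :
    ‖P‖ ≤ G.kappaPair (ψ ⁻¹' {1}) (ψ ⁻¹' {-1}) := by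
  set κ := G.kappaPair (ψ ⁻¹' {1}) (ψ ⁻¹' {-1})
  have hrow (v : V) :
      ∑' u, G.sameClassWeight ψ v u ≤ ENNReal.ofReal κ * ENNReal.ofReal (G.deg v) := by
    rw [G.tsum_sameClassWeight]
    gcongr
    exact G.pProb_sameClass_le_kappaPair hψ v
  refine P.opNorm_le_bound (G.kappaPair_nonneg _ _) fun f =>
    Lp.norm_le_mul_of_lintegral_sq_le (G.kappaPair_nonneg _ _) ?_
  calc ∫⁻ v, ‖P f v‖ₑ ^ 2 ∂G.measure
      ≤ ∫⁻ v, ((∑' u, G.sameClassWeight ψ v u * ‖f u‖ₑ) / ENNReal.ofReal (G.deg v)) ^ 2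
          ∂G.measure := by
        refine lintegral_mono_ae ?_
        filter_upwards [hP f] with v hv
        rw [hv]
        gcongr
        exact G.enorm_inv_deg_mul_tsum_le ψ f v
    _ = ∑' v, ENNReal.ofReal (G.deg v) *
          ((∑' u, G.sameClassWeight ψ v u * ‖f u‖ₑ) / ENNReal.ofReal (G.deg v)) ^ 2 :=
        G.lintegral_measure _
    _ ≤ ENNReal.ofReal κ ^ 2 * ∑' v, ENNReal.ofReal (G.deg v) * ‖f v‖ₑ ^ 2 :=
        ENNReal.tsum_mul_div_sq_le_of_symm (G.sameClassWeight_comm ψ)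
          (fun v => (ENNReal.ofReal_pos.2 (G.deg_pos v)).ne') (fun _ => ENNReal.ofReal_ne_top)
          hrow _
    _ = ENNReal.ofReal κ ^ 2 * ∫⁻ v, ‖f v‖ₑ ^ 2 ∂G.measure := by rw [G.lintegral_measure]

open SummableWeightedGraph in
/-- `‖Pψ‖ ≤ κ(A,B)` where `A = ψ⁻¹(1)`, `B = ψ⁻¹(-1)`. -/
theorem norm_Ppsi_le_kappaPair {V : Type*} [MeasurableSpace V] [MeasurableSingletonClass V]
    [Countable V] [Nonempty V] (G : SummableWeightedGraph V)
    (ψ : V → ℝ) (hψ : ∀ v, ψ v = 1 ∨ ψ v = -1)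
    (hA : (ψ ⁻¹' {1}).Nonempty) (hB : (ψ ⁻¹' {-1}).Nonempty)
    (P : Lp ℝ 2 G.measure →L[ℝ] Lp ℝ 2 G.measure)
    (hP : ∀ f : Lp ℝ 2 G.measure, ∀ᵐ v ∂G.measure,
      P f v = (G.deg v)⁻¹ * ∑' u : {u : V // ψ u = ψ v}, G.m v u * f u) :
    ‖P‖ ≤ G.kappaPair (ψ ⁻¹' {1}) (ψ ⁻¹' {-1}) :=
  norm_Ppsi_le_kappaPair_general G ψ hψ P hP
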